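/- arXiv:1707.00819 — 6 statements merged into one kernel-verified Lean document; each statement's English description precedes it below -/
import Mathlib

section
/- Lemma 2 (transitivity of exact transformations). Let M_X, M_Y, M_Z be SEMs over finite variable index sets ι_X, ι_Y, ι_Z respectively, and let τ_{YX} : (ι_X → ℝ) → (ι_Y → ℝ) and τ_{ZY} : (ι_Y → ℝ) → (ι_Z → ℝ) be measurable maps. If M_Z is an exact τ_{ZY}-transformation of M_Y and M_Y is an exact τ_{YX}-transformation of M_X, then M_Z is an exact (τ_{ZY} ∘ τ_{YX})-transformation of M_X (with intervention map ω_{ZY} ∘ ω_{YX}). -/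
open MeasureTheory

/-- A perfect intervention `do(X_j = x j for j ∈ J)`. -/
structure Intervention (ι : Type) where
  J : Set ι
  x : ι → ℝ
  zero_off : ∀ j ∉ J, x j = 0

namespace Intervention

variable {ι : Type}

theorem ext' {i j : Intervention ι} (hJ : i.J = j.J) (hx : i.x = j.x) : i = j := by
  cases i; cases j; simp_all

/-- The natural partial order on interventions. -/
instance : PartialOrder (Intervention ι) where
  le i j := i.J ⊆ j.J ∧ ∀ k ∈ i.J, i.x k = j.x k
  le_refl i := ⟨subset_rfl, fun _ _ => rfl⟩
  le_trans i j k hij hjk :=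
    ⟨hij.1.trans hjk.1, fun l hl => (hij.2 l hl).trans (hjk.2 l (hij.1 hl))⟩
  le_antisymm i j hij hji := by
    have hJ : i.J = j.J := subset_antisymm hij.1 hji.1
    refine ext' hJ (funext fun k => ?_)
    by_cases hk : k ∈ i.J
    · exact hij.2 k hk
    · rw [i.zero_off k hk, j.zero_off k (hJ ▸ hk)]

/-- The null intervention. -/
def null : Intervention ι := ⟨∅, 0, fun _ _ => rfl⟩

end Intervention

/-- A structural equation model over a finite variable index set `ι`
with exogenous index set `κ`. -/
structure SEM (ι κ : Type) [Finite ι] where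
  f : ι → (ι → ℝ) → (κ → ℝ) → ℝ
  I : Set (Intervention ι)
  null_mem : Intervention.null ∈ I
  P : Measure (κ → ℝ)
  prob : IsProbabilityMeasure P
  sol : Intervention ι → (κ → ℝ) → (ι → ℝ)
  sol_measurable : ∀ i ∈ I, Measurable (sol i)
  sol_solves : ∀ i ∈ I, ∀ᵐ e ∂P,
    (∀ j ∈ i.J, sol i e j = i.x j) ∧ ∀ j ∉ i.J, sol i e j = f j (sol i e) e
  sol_unique : ∀ i ∈ I, ∀ᵐ e ∂P, ∀ v : ι → ℝ,
    (∀ j ∈ i.J, v j = i.x j) → (∀ j ∉ i.J, v j = f j v e) → v = sol i e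

namespace SEM

variable {ι κ ι' κ' : Type} [Finite ι] [Finite ι']

/-- The distribution implied by an SEM under the intervention `i`. -/
noncomputable def dist (M : SEM ι κ) (i : Intervention ι) : Measure (ι → ℝ) :=
  M.P.map (M.sol i)

/-- `M_Y` is an exact `τ`-transformation of `M_X` via the intervention map `ω`. -/
def ExactVia (MX : SEM ι κ) (MY : SEM ι' κ') (τ : (ι → ℝ) → (ι' → ℝ))
    (ω : Intervention ι → Intervention ι') : Prop :=
  (∀ i ∈ MX.I, ω i ∈ MY.I) ∧
  (∀ j ∈ MY.I, ∃ i ∈ MX.I, ω i = j) ∧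
  (∀ i ∈ MX.I, ∀ j ∈ MX.I, i ≤ j → ω i ≤ ω j) ∧
  (∀ i ∈ MX.I, (MX.dist i).map τ = MY.dist (ω i))

/-- `M_Y` is an exact `τ`-transformation of `M_X`. -/
def IsExactTransformation (MX : SEM ι κ) (MY : SEM ι' κ')
    (τ : (ι → ℝ) → (ι' → ℝ)) : Prop :=
  ∃ ω, ExactVia MX MY τ ω

end SEM

/-- **Lemma 2 (transitivity of exact transformations).** If `M_Z` is an exact
`τ_ZY`-transformation of `M_Y` (via `ω_ZY`) and `M_Y` is an exact `τ_YX`-transformation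
of `M_X` (via `ω_YX`), then `M_Z` is an exact `(τ_ZY ∘ τ_YX)`-transformation of `M_X`
with intervention map `ω_ZY ∘ ω_YX`. -/
theorem exact_transitive {ιX κX ιY κY ιZ κZ : Type} [Finite ιX] [Finite ιY] [Finite ιZ]
    (MX : SEM ιX κX) (MY : SEM ιY κY) (MZ : SEM ιZ κZ)
    (τYX : (ιX → ℝ) → (ιY → ℝ)) (τZY : (ιY → ℝ) → (ιZ → ℝ))
    (hτYX : Measurable τYX) (hτZY : Measurable τZY)
    (ωYX : Intervention ιX → Intervention ιY) (ωZY : Intervention ιY → Intervention ιZ)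
    (hZY : MY.ExactVia MZ τZY ωZY) (hYX : MX.ExactVia MY τYX ωYX) :
    MX.ExactVia MZ (τZY ∘ τYX) (ωZY ∘ ωYX) := by
  obtain ⟨h1, h2, h3, h4⟩ := hYX
  obtain ⟨g1, g2, g3, g4⟩ := hZY
  refine ⟨fun i hi => g1 _ (h1 i hi), ?_, fun i hi j hj hij => g3 _ (h1 i hi) _ (h1 j hj) (h3 i hi j hj hij), fun i hi => ?_⟩
  · intro k hk
    obtain ⟨j, hj, rfl⟩ := g2 k hk
    obtain ⟨i, hi, rfl⟩ := h2 j hj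
    exact ⟨i, hi, rfl⟩
  · rw [← Measure.map_map hτZY hτYX, h4 i hi, g4 _ (h1 i hi)]; rfl
end

section
/- Theorem 4 (marginalisation of childless variables). Let M_X = (f, I_X, P) be an SEM over a finite variable index set ι with exogenous index set κ, and let Z ⊆ ι be a set of childless variables, i.e. for every i ∈ ι, every e : κ → ℝ, and all v, v' : ι → ℝ that agree on ι ∖ Z, one has f i v e = f i v' e. Let τ : (ι → ℝ) → (ι ∖ Z → ℝ) be the restriction (projection) map. Then the SEM M_Y over ι ∖ Z — whose structural function for i ∈ ι ∖ Z is the restriction of f i (well defined by childlessness), whose intervention set is I_Y = { (J ∖ Z, x · 1_{J ∖ Z}) : (J, x) ∈ I_X } (drop all assignments to Z-variables), and whose exogenous measure is P — is a well-defined SEM, and M_Y is an exact τ-transformation of M_X via the surjective order-preserving map ω(J, x) = (J ∖ Z, x · 1_{J ∖ Z}). -/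
open MeasureTheory

open Classical

/-- The marginalised intervention `ω(J, x) = (J ∖ Z, x · 1_{J ∖ Z})`, viewed as an
intervention on the variables indexed by `ι ∖ Z`. -/
noncomputable def margInt {ι : Type} (Z : Set ι) (i : Intervention ι) :
    Intervention {j : ι // j ∉ Z} :=
  ⟨{j | j.1 ∈ i.J}, fun j => if j.1 ∈ i.J then i.x j.1 else 0, fun _ hj => if_neg hj⟩

/-- Extension of a function on `ι ∖ Z` to `ι`, by `0` on `Z`. -/
noncomputable def margExt {ι : Type} (Z : Set ι) (y : {j : ι // j ∉ Z} → ℝ) : ι → ℝ :=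
  fun j => if h : j ∉ Z then y ⟨j, h⟩ else 0

/-- The solution map of the marginalised SEM. -/
noncomputable def margSol {ι κ : Type} [Finite ι] (MX : SEM ι κ) (Z : Set ι)
    (i' : Intervention {j : ι // j ∉ Z}) (e : κ → ℝ) : {j : ι // j ∉ Z} → ℝ :=
  if h : ∃ i ∈ MX.I, margInt Z i = i' then fun j => MX.sol h.choose e j.1 else 0

/-- **Theorem 4 (marginalisation of childless variables).** Let `Z ⊆ ι` be a set of
childless variables of the SEM `M_X`, i.e. no structural function depends on the values of
the `Z`-variables. Then the SEM `M_Y` over `ι ∖ Z` — whose structural functions are the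
restrictions of those of `M_X`, whose interventions drop all assignments to `Z`-variables,
and whose exogenous measure is that of `M_X` — is a well-defined SEM and is an exact
`τ`-transformation of `M_X`, where `τ` is the projection, via the surjective
order-preserving map `ω(J, x) = (J ∖ Z, x · 1_{J ∖ Z})`. -/
theorem marginalisation_childless {ι κ : Type} [Finite ι] (MX : SEM ι κ) (Z : Set ι)
    (hchildless : ∀ i e, ∀ v v' : ι → ℝ,
      (∀ j ∉ Z, v j = v' j) → MX.f i v e = MX.f i v' e) :
    ∃ MY : SEM {j : ι // j ∉ Z} κ,
      (∀ (i : {j : ι // j ∉ Z}) (y : {j : ι // j ∉ Z} → ℝ) e,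
        MY.f i y e = MX.f i.1 (fun j => if h : j ∉ Z then y ⟨j, h⟩ else 0) e) ∧
      MY.I = margInt Z '' MX.I ∧
      MY.P = MX.P ∧
      MX.ExactVia MY (fun v j => v j.1) (margInt Z) := by
  classical
  have hτm : Measurable (fun v : ι → ℝ => fun j : {j : ι // j ∉ Z} => v j.1) :=
    measurable_pi_lambda _ fun j => measurable_pi_apply j.1
  -- Key uniqueness lemma: any solution of the marginal constraints agrees with the
  -- restriction of the solution of `MX`.
  have key : ∀ i ∈ MX.I, ∀ᵐ e ∂MX.P, ∀ v' : {j : ι // j ∉ Z} → ℝ,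
      (∀ j : {j : ι // j ∉ Z}, j.1 ∈ i.J → v' j = i.x j.1) →
      (∀ j : {j : ι // j ∉ Z}, j.1 ∉ i.J → v' j = MX.f j.1 (margExt Z v') e) →
      v' = fun j => MX.sol i e j.1 := by
    intro i hi
    filter_upwards [MX.sol_unique i hi] with e he v' h1 h2
    set v : ι → ℝ := fun j => if h : j ∉ Z then v' ⟨j, h⟩
      else if j ∈ i.J then i.x j else MX.f j (margExt Z v') e with hv
    have hagree : ∀ j ∉ Z, margExt Z v' j = v j := by
      intro j h
      simp only [margExt, hv, dif_pos h]
    have hveq : v = MX.sol i e := by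
      apply he
      · intro j hj
        by_cases h : j ∉ Z
        · rw [show v j = v' ⟨j, h⟩ from dif_pos h]
          exact h1 ⟨j, h⟩ hj
        · rw [show v j = if j ∈ i.J then i.x j else MX.f j (margExt Z v') e
            from dif_neg h, if_pos hj]
      · intro j hj
        have hf : MX.f j (margExt Z v') e = MX.f j v e := hchildless j e _ _ hagree
        by_cases h : j ∉ Z
        · rw [show v j = v' ⟨j, h⟩ from dif_pos h, h2 ⟨j, h⟩ hj, hf]
        · simp only [hv, dif_neg h, if_neg hj]
          exact hf
    funext j
    have h := congrFun hveq j.1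
    rwa [show v j.1 = v' j from dif_pos j.2] at h
  -- The restriction of a solution of `MX` solves the marginal constraints.
  have solves' : ∀ i ∈ MX.I, ∀ᵐ e ∂MX.P,
      (∀ j : {j : ι // j ∉ Z}, j.1 ∈ i.J → MX.sol i e j.1 = i.x j.1) ∧
      (∀ j : {j : ι // j ∉ Z}, j.1 ∉ i.J →
        MX.sol i e j.1 = MX.f j.1 (margExt Z (fun k => MX.sol i e k.1)) e) := by
    intro i hi
    filter_upwards [MX.sol_solves i hi] with e hsol
    obtain ⟨h1, h2⟩ := hsol
    refine ⟨fun j hj => h1 j.1 hj, fun j hj => ?_⟩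
    rw [h2 j.1 hj]
    refine hchildless j.1 e _ _ fun k hk => ?_
    exact (show margExt Z (fun k : {j : ι // j ∉ Z} => MX.sol i e k.1) k = MX.sol i e k
      from dif_pos hk).symm
  -- The restriction of the solution of `MX` agrees a.e. with `margSol`.
  have hsol : ∀ i ∈ MX.I, ∀ᵐ e ∂MX.P,
      (fun j : {j : ι // j ∉ Z} => MX.sol i e j.1) = margSol MX Z (margInt Z i) e := by
    intro i hi
    have hmem : ∃ i₀ ∈ MX.I, margInt Z i₀ = margInt Z i := ⟨i, hi, rfl⟩
    obtain ⟨hi₀, heq⟩ := hmem.choose_spec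
    have hJ : ∀ j : {j : ι // j ∉ Z}, j.1 ∈ hmem.choose.J ↔ j.1 ∈ i.J := by
      intro j
      have h := congrArg Intervention.J heq
      simp only [margInt] at h
      exact Set.ext_iff.mp h j
    have hx : ∀ j : {j : ι // j ∉ Z}, j.1 ∈ hmem.choose.J →
        hmem.choose.x j.1 = i.x j.1 := by
      intro j hj
      have h := congrFun (congrArg Intervention.x heq) j
      simp only [margInt] at h
      have h' : (if j.1 ∈ hmem.choose.J then hmem.choose.x j.1 else 0) =
          (if j.1 ∈ i.J then i.x j.1 else 0) := h
      rwa [if_pos hj, if_pos ((hJ j).mp hj)] at h'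
    filter_upwards [key hmem.choose hi₀, solves' i hi] with e hkey hse
    obtain ⟨h1, h2⟩ := hse
    have hms : margSol MX Z (margInt Z i) e = fun j => MX.sol hmem.choose e j.1 := by
      unfold margSol
      rw [dif_pos hmem]
    rw [hms]
    exact hkey _ (fun j hj => (h1 j ((hJ j).mp hj)).trans (hx j hj).symm)
      (fun j hj => h2 j fun hc => hj ((hJ j).mpr hc))
  refine ⟨{
    f := fun i y e => MX.f i.1 (margExt Z y) e
    I := margInt Z '' MX.I
    null_mem := ⟨Intervention.null, MX.null_mem, Intervention.ext'
      (by simp [margInt, Intervention.null, Set.eq_empty_iff_forall_notMem])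
      (by funext j; simp [margInt, Intervention.null])⟩
    P := MX.P
    prob := MX.prob
    sol := margSol MX Z
    sol_measurable := ?_
    sol_solves := ?_
    sol_unique := ?_ }, fun i y e => rfl, rfl, rfl,
    fun i hi => ⟨i, hi, rfl⟩, fun j hj => hj, ?_, ?_⟩
  · -- measurability
    intro i' hi'
    have hmem : ∃ i ∈ MX.I, margInt Z i = i' := hi'
    have hms : margSol MX Z i' = fun e j => MX.sol hmem.choose e j.1 := by
      funext e
      unfold margSol
      rw [dif_pos hmem]
    rw [hms]
    exact measurable_pi_lambda _ fun j =>
      (measurable_pi_apply j.1).comp (MX.sol_measurable _ hmem.choose_spec.1)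
  · -- sol_solves
    rintro i' ⟨i₀, hi₀, rfl⟩
    filter_upwards [solves' i₀ hi₀, hsol i₀ hi₀] with e hse hs
    obtain ⟨h1, h2⟩ := hse
    constructor
    · intro j hj
      rw [← congrFun hs j]
      have hj' : j.1 ∈ i₀.J := hj
      exact (h1 j hj').trans (by simp [margInt, hj'])
    · intro j hj
      have hj' : j.1 ∉ i₀.J := hj
      rw [← congrFun hs j, ← hs]
      exact h2 j hj'
  · -- sol_unique
    rintro i' ⟨i₀, hi₀, rfl⟩
    filter_upwards [key i₀ hi₀, hsol i₀ hi₀] with e hkey hs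
    intro v h1 h2
    rw [← hs]
    refine hkey v (fun j hj => (h1 j hj).trans ?_) (fun j hj => h2 j hj)
    simp [margInt, hj]
  · -- order-preserving
    intro i hi j hj hij
    refine ⟨fun k hk => hij.1 hk, fun k hk => ?_⟩
    have hk' : k.1 ∈ i.J := hk
    simp only [margInt]
    rw [if_pos hk', if_pos (hij.1 hk'), hij.2 k.1 hk']
  · -- distributions
    intro i hi
    unfold SEM.dist
    rw [Measure.map_map hτm (MX.sol_measurable i hi)]
    refine Measure.map_congr ?_
    filter_upwards [hsol i hi] with e hs
    exact hs
end

section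
/- Theorem 5 (marginalisation of non-intervened variables). Let M_X = (f, I_X, P) be an acyclic SEM over a finite variable index set ι with exogenous index set κ: there exists a strict linear order ≺ on ι such that for every i ∈ ι, every e : κ → ℝ and all v, v' : ι → ℝ agreeing on { j : j ≺ i }, one has f i v e = f i v' e. Let Z ⊆ ι be a set of variables never intervened upon, i.e. J ∩ Z = ∅ for every (J, x) ∈ I_X, and let τ : (ι → ℝ) → (ι ∖ Z → ℝ) be the restriction (projection) map. Then there exists an SEM M_Y over ι ∖ Z, with exogenous index set κ and exogenous measure P and with intervention set I_Y = { (J, x restricted to ι ∖ Z) : (J, x) ∈ I_X } (its structural functions being obtained from those of M_X by recursively substituting the equations of the Z-variables), such that M_Y is an exact τ-transformation of M_X via the order isomorphism ω(J, x) = (J, x restricted to ι ∖ Z). -/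
open MeasureTheory

/-- The restriction of an intervention to the variables indexed by `ι ∖ Z`:
`ω(J, x) = (J, x restricted to ι ∖ Z)`. -/
def restrInt {ι : Type} (Z : Set ι) (i : Intervention ι) : Intervention {j : ι // j ∉ Z} :=
  ⟨{j | j.1 ∈ i.J}, fun j => i.x j.1, fun j hj => i.zero_off j.1 hj⟩

noncomputable section Aux

open Classical

variable {ι κ : Type} (f : ι → (ι → ℝ) → (κ → ℝ) → ℝ)
  {r : ι → ι → Prop} (wf : WellFounded r) (Z : Set ι)

/-- Extend a valuation of the variables outside `Z` to all variables by
recursively substituting the structural equations of the `Z`-variables. -/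
noncomputable def extFun (v : {j : ι // j ∉ Z} → ℝ) (e : κ → ℝ) : ι → ℝ :=
  wf.fix fun a ih =>
    if h : a ∈ Z then f a (fun b => if hb : r b a then ih b hb else 0) e else v ⟨a, h⟩

theorem extFun_eq (v : {j : ι // j ∉ Z} → ℝ) (e : κ → ℝ) (a : ι) :
    extFun f wf Z v e a =
      if h : a ∈ Z then
        f a (fun b => if _ : r b a then extFun f wf Z v e b else 0) e
      else v ⟨a, h⟩ := by
  unfold extFun
  rw [WellFounded.fix_eq]

theorem extFun_notinZ (v : {j : ι // j ∉ Z} → ℝ) (e : κ → ℝ) {a : ι} (h : a ∉ Z) :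
    extFun f wf Z v e a = v ⟨a, h⟩ := by
  rw [extFun_eq, dif_neg h]

theorem extFun_inZ
    (hacyclic : ∀ i e, ∀ v v' : ι → ℝ, (∀ j, r j i → v j = v' j) → f i v e = f i v' e)
    (v : {j : ι // j ∉ Z} → ℝ) (e : κ → ℝ) {a : ι} (h : a ∈ Z) :
    extFun f wf Z v e a = f a (extFun f wf Z v e) e := by
  rw [extFun_eq, dif_pos h]
  exact hacyclic a e _ _ fun j hj => by rw [dif_pos hj]

theorem extFun_eq_self
    (hacyclic : ∀ i e, ∀ v v' : ι → ℝ, (∀ j, r j i → v j = v' j) → f i v e = f i v' e)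
    (w : ι → ℝ) (e : κ → ℝ) (hw : ∀ z ∈ Z, w z = f z w e) :
    extFun f wf Z (fun j => w j.1) e = w := by
  funext a
  induction a using WellFounded.induction wf with
  | _ a ih =>
    rw [extFun_eq]
    split_ifs with h
    · rw [hw a h]
      exact hacyclic a e _ w fun j hj => by rw [dif_pos hj, ih j hj]
    · rfl

end Aux

/-- **Theorem 5 (marginalisation of non-intervened variables).** Let `M_X` be an acyclic
SEM (witnessed by a strict linear order `r` on `ι` such that each structural function
`f i` depends only on the variables strictly below `i`), and let `Z ⊆ ι` be a set of
variables never intervened upon by any intervention of `M_X`. Then there is an SEM `M_Y`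
over `ι ∖ Z`, with the same exogenous measure and with intervention set
`{ (J, x restricted to ι ∖ Z) : (J, x) ∈ I_X }`, such that `M_Y` is an exact
`τ`-transformation of `M_X` (where `τ` is the projection) via the map
`ω(J, x) = (J, x restricted to ι ∖ Z)`, which is moreover an order isomorphism onto
the intervention set of `M_Y`. -/
theorem marginalisation_nonintervened {ι κ : Type} [Finite ι] (MX : SEM ι κ)
    (r : ι → ι → Prop) (hr : IsStrictTotalOrder ι r)
    (hacyclic : ∀ i e, ∀ v v' : ι → ℝ,
      (∀ j, r j i → v j = v' j) → MX.f i v e = MX.f i v' e)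
    (Z : Set ι) (hZ : ∀ i ∈ MX.I, i.J ∩ Z = ∅) :
    ∃ MY : SEM {j : ι // j ∉ Z} κ,
      MY.I = restrInt Z '' MX.I ∧
      MY.P = MX.P ∧
      MX.ExactVia MY (fun v j => v j.1) (restrInt Z) ∧
      (∀ i ∈ MX.I, ∀ j ∈ MX.I, restrInt Z i ≤ restrInt Z j → i ≤ j) := by
  classical
  haveI := hr
  have wf : WellFounded r := Finite.wellFounded_of_trans_of_irrefl r
  -- order-reflection of restrInt on the intervention set
  have hrefl : ∀ i ∈ MX.I, ∀ j ∈ MX.I, restrInt Z i ≤ restrInt Z j → i ≤ j := by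
    intro i hi j hj h
    have hZi : ∀ a ∈ i.J, a ∉ Z := by
      intro a ha haZ
      have : a ∈ i.J ∩ Z := ⟨ha, haZ⟩
      rw [hZ i hi] at this
      exact this
    constructor
    · intro a ha
      exact h.1 (show (⟨a, hZi a ha⟩ : {j : ι // j ∉ Z}) ∈ (restrInt Z i).J from ha)
    · intro a ha
      exact h.2 ⟨a, hZi a ha⟩ ha
  have hinj : ∀ i ∈ MX.I, ∀ j ∈ MX.I, restrInt Z i = restrInt Z j → i = j := by
    intro i hi j hj h
    exact le_antisymm (hrefl i hi j hj h.le) (hrefl j hj i hi h.ge)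
  have hτmeas : Measurable (fun (v : ι → ℝ) (j : {j : ι // j ∉ Z}) => v j.1) :=
    measurable_pi_iff.mpr fun j => measurable_pi_apply j.1
  refine ⟨{
    f := fun k v e => MX.f k.1 (extFun MX.f wf Z v e) e
    I := restrInt Z '' MX.I
    null_mem := ⟨Intervention.null, MX.null_mem,
      Intervention.ext' (by ext j; simp [restrInt, Intervention.null]) rfl⟩
    P := MX.P
    prob := MX.prob
    sol := fun k e =>
      if h : k ∈ restrInt Z '' MX.I then fun m => MX.sol h.choose e m.1 else 0
    sol_measurable := ?_
    sol_solves := ?_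
    sol_unique := ?_ }, rfl, rfl, ⟨fun i hi => ⟨i, hi, rfl⟩, fun j hj => hj, ?_, ?_⟩,
    hrefl⟩
  · -- measurability
    intro k hk
    simp only [dif_pos hk]
    exact measurable_pi_iff.mpr fun m =>
      (measurable_pi_apply m.1).comp (MX.sol_measurable _ hk.choose_spec.1)
  · -- sol_solves
    intro k hk
    obtain ⟨hi, hres⟩ := hk.choose_spec
    set i := hk.choose with hidef
    filter_upwards [MX.sol_solves i hi] with e he
    have hsol : (if h : k ∈ restrInt Z '' MX.I then
        fun m : {j : ι // j ∉ Z} => MX.sol h.choose e m.1 else 0)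
        = fun m : {j : ι // j ∉ Z} => MX.sol i e m.1 := by
      rw [dif_pos hk]
    rw [hsol]
    have hvZ : ∀ z ∈ Z, MX.sol i e z = MX.f z (MX.sol i e) e := by
      intro z hz
      refine he.2 z fun hzJ => ?_
      have : z ∈ i.J ∩ Z := ⟨hzJ, hz⟩
      rw [hZ i hi] at this
      exact this
    have hext := extFun_eq_self MX.f wf Z hacyclic (MX.sol i e) e hvZ
    constructor
    · intro m hm
      have hm' : m.1 ∈ i.J := by rw [← hres] at hm; exact hm
      show MX.sol i e m.1 = k.x m
      rw [he.1 m.1 hm', ← hres]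
      rfl
    · intro m hm
      have hm' : m.1 ∉ i.J := by rw [← hres] at hm; exact hm
      show MX.sol i e m.1 = MX.f m.1 (extFun MX.f wf Z (fun j => MX.sol i e j.1) e) e
      rw [hext]
      exact he.2 m.1 hm' 
  · -- sol_unique
    intro k hk
    obtain ⟨hi, hres⟩ := hk.choose_spec
    set i := hk.choose with hidef
    filter_upwards [MX.sol_unique i hi] with e he w hwJ hwf
    set v := extFun MX.f wf Z w e with hvdef
    have hv : v = MX.sol i e := by
      refine he v ?_ ?_
      · intro a ha
        have haZ : a ∉ Z := by
          intro haZ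
          have : a ∈ i.J ∩ Z := ⟨ha, haZ⟩
          rw [hZ i hi] at this
          exact this
        have hmem : (⟨a, haZ⟩ : {j : ι // j ∉ Z}) ∈ k.J := by
          rw [← hres]; exact ha
        have := hwJ ⟨a, haZ⟩ hmem
        rw [hvdef, extFun_notinZ MX.f wf Z w e haZ, this, ← hres]
        rfl
      · intro a ha
        by_cases haZ : a ∈ Z
        · exact extFun_inZ MX.f wf Z hacyclic w e haZ
        · have hmem : (⟨a, haZ⟩ : {j : ι // j ∉ Z}) ∉ k.J := by
            rw [← hres]; exact ha
          have := hwf ⟨a, haZ⟩ hmem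
          rw [hvdef, extFun_notinZ MX.f wf Z w e haZ, this]
    funext m
    rw [dif_pos hk]
    calc w m = v m.1 := (extFun_notinZ MX.f wf Z w e m.2).symm
    _ = MX.sol i e m.1 := by rw [hv]
  · -- omega monotone
    intro i _ j _ hij
    exact ⟨fun m hm => hij.1 hm, fun m hm => hij.2 m.1 hm⟩
  · -- pushforward equality
    intro i hi
    have hk : restrInt Z i ∈ restrInt Z '' MX.I := ⟨i, hi, rfl⟩
    have hch : hk.choose = i := hinj _ hk.choose_spec.1 i hi hk.choose_spec.2
    show (MX.P.map (MX.sol i)).map _ = MX.P.map _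
    rw [Measure.map_map hτmeas (MX.sol_measurable i hi)]
    congr 1
    funext e
    simp only [dif_pos hk, hch]
    rfl
end

section
/- Theorem 6 (micro- to macro-level by averaging). Let n, m ≥ 1, let A be an m × n real matrix such that every column of A sums to the same value a (∀ j, ∑_{i=1}^m A_{ij} = a), and let P be any probability measure on ℝ^{n+m}. Let M_X be the linear SEM over variables (W_1,…,W_n, Z_1,…,Z_m) with exogenous variables (E, F) ∼ P, structural equations W_i = E_i (1 ≤ i ≤ n) and Z_i = ∑_{j=1}^n A_{ij} W_j + F_i (1 ≤ i ≤ m), and intervention set I_X = { null } ∪ { do(W = w) : w ∈ ℝ^n } ∪ { do(Z = z) : z ∈ ℝ^m } ∪ { do(W = w, Z = z) : w ∈ ℝ^n, z ∈ ℝ^m } (interventions set all W-variables and/or all Z-variables simultaneously). Let τ : ℝ^{n+m} → ℝ² be the averaging map τ(w, z) = ((1/n) ∑_{i=1}^n w_i, (1/m) ∑_{j=1}^m z_j). Let M_Y be the SEM over two variables (Ŵ, Ẑ) with structural equations Ŵ = Ê, Ẑ = (n·a/m)·Ŵ + F̂, exogenous law of (Ê, F̂) equal to the pushforward of P under (e,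 f) ↦ ((1/n) ∑_i e_i, (1/m) ∑_i f_i), and intervention set I_Y = { null } ∪ { do(Ŵ = ŵ) : ŵ ∈ ℝ } ∪ { do(Ẑ = ẑ) : ẑ ∈ ℝ } ∪ { do(Ŵ = ŵ, Ẑ = ẑ) : ŵ, ẑ ∈ ℝ }. Then M_Y is an exact τ-transformation of M_X, via the surjective order-preserving map ω sending null to null, do(W = w) to do(Ŵ = (1/n)∑ w_i), do(Z = z) to do(Ẑ = (1/m)∑ z_i), and do(W = w, Z = z) to do(Ŵ = (1/n)∑ w_i, Ẑ = (1/m)∑ z_i). -/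
open MeasureTheory

open Classical

section MicroMacro

variable {n m : ℕ}

/-- The micro-level intervention `do(W = w)`. -/
def doW (m : ℕ) (w : Fin n → ℝ) : Intervention (Fin n ⊕ Fin m) :=
  ⟨Set.range Sum.inl, Sum.elim w 0, by
    rintro (a | b) hj
    · exact absurd ⟨a, rfl⟩ hj
    · rfl⟩

/-- The micro-level intervention `do(Z = z)`. -/
def doZ (n : ℕ) (z : Fin m → ℝ) : Intervention (Fin n ⊕ Fin m) :=
  ⟨Set.range Sum.inr, Sum.elim 0 z, by
    rintro (a | b) hj
    · rfl
    · exact absurd ⟨b, rfl⟩ hj⟩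

/-- The micro-level intervention `do(W = w, Z = z)`. -/
def doWZ (w : Fin n → ℝ) (z : Fin m → ℝ) : Intervention (Fin n ⊕ Fin m) :=
  ⟨Set.univ, Sum.elim w z, fun j hj => absurd (Set.mem_univ j) hj⟩

/-- The macro-level intervention `do(Ŵ = w0)` (the variable `false` is `Ŵ`). -/
def doWhat (w0 : ℝ) : Intervention Bool :=
  ⟨{false}, fun b => if b then 0 else w0, by
    intro b hb
    cases b
    · exact absurd rfl hb
    · rfl⟩

/-- The macro-level intervention `do(Ẑ = z0)` (the variable `true` is `Ẑ`). -/
def doZhat (z0 : ℝ) : Intervention Bool :=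
  ⟨{true}, fun b => if b then z0 else 0, by
    intro b hb
    cases b
    · rfl
    · exact absurd rfl hb⟩

/-- The macro-level intervention `do(Ŵ = w0, Ẑ = z0)`. -/
def doWZhat (w0 z0 : ℝ) : Intervention Bool :=
  ⟨Set.univ, fun b => if b then z0 else w0, fun b hb => absurd (Set.mem_univ b) hb⟩

/-- The intervention map `ω` of Theorem 6: it sends the null intervention to the null
intervention, `do(W = w)` to `do(Ŵ = (1/n) ∑ᵢ wᵢ)`, `do(Z = z)` to
`do(Ẑ = (1/m) ∑ᵢ zᵢ)`, and `do(W = w, Z = z)` to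
`do(Ŵ = (1/n) ∑ᵢ wᵢ, Ẑ = (1/m) ∑ᵢ zᵢ)`. -/
noncomputable def mmOmega (n m : ℕ) (i : Intervention (Fin n ⊕ Fin m)) : Intervention Bool :=
  ⟨{b | (b = false ∧ ∃ j, Sum.inl j ∈ i.J) ∨ (b = true ∧ ∃ j, Sum.inr j ∈ i.J)},
   fun b =>
    if b then (if ∃ j, Sum.inr j ∈ i.J then (1 / (m : ℝ)) * ∑ j, i.x (Sum.inr j) else 0)
    else (if ∃ j, Sum.inl j ∈ i.J then (1 / (n : ℝ)) * ∑ j, i.x (Sum.inl j) else 0),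
   by
    intro b hb
    cases b with
    | false =>
        simp only [Bool.false_eq_true, if_false]
        exact if_neg fun h => hb (Or.inl ⟨rfl, h⟩)
    | true =>
        simp only [if_true]
        exact if_neg fun h => hb (Or.inr ⟨rfl, h⟩)⟩

noncomputable def avgMap (n m : ℕ) : ((Fin n ⊕ Fin m) → ℝ) → (Bool → ℝ) :=
  fun ef b => if b then 1 / (m : ℝ) * ∑ i, ef (Sum.inr i)
    else 1 / (n : ℝ) * ∑ i, ef (Sum.inl i)

lemma avgMap_measurable : Measurable (avgMap n m) := by
  refine measurable_pi_iff.mpr fun b => ?_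
  cases b <;>
    exact Measurable.comp (measurable_const_mul _)
      (Finset.measurable_sum _ fun i _ => measurable_pi_apply _)

noncomputable def macroSol (c : ℝ) (k : Intervention Bool) (e : Bool → ℝ) : Bool → ℝ :=
  fun b =>
    if b then
      (if true ∈ k.J then k.x true
       else c * (if false ∈ k.J then k.x false else e false) + e true)
    else (if false ∈ k.J then k.x false else e false)

lemma macroSol_measurable (c : ℝ) (k : Intervention Bool) : Measurable (macroSol c k) := by
  classical
  refine measurable_pi_iff.mpr fun b => ?_
  unfold macroSol
  by_cases h1 : true ∈ k.J <;> by_cases h2 : false ∈ k.J <;>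
    cases b <;> simp [h1, h2] <;> fun_prop

lemma macroSol_solves (c : ℝ) (k : Intervention Bool) (e : Bool → ℝ) :
    (∀ j ∈ k.J, macroSol c k e j = k.x j) ∧
    (∀ j ∉ k.J, macroSol c k e j =
      (fun b (y e' : Bool → ℝ) => if b then c * y false + e' true else e' false)
        j (macroSol c k e) e) := by
  classical
  constructor
  · intro j hj; cases j <;> simp [macroSol, hj]
  · intro j hj; cases j <;> simp [macroSol, hj]

lemma macroSol_unique (c : ℝ) (k : Intervention Bool) (e : Bool → ℝ) (v : Bool → ℝ)
    (hJ : ∀ j ∈ k.J, v j = k.x j)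
    (hnJ : ∀ j ∉ k.J, v j =
      (fun b (y e' : Bool → ℝ) => if b then c * y false + e' true else e' false) j v e) :
    v = macroSol c k e := by
  classical
  have hf : v false = macroSol c k e false := by
    by_cases h : false ∈ k.J
    · rw [hJ false h]; simp [macroSol, h]
    · rw [hnJ false h]; simp [macroSol, h]
  funext b
  cases b
  · exact hf
  · by_cases h : true ∈ k.J
    · rw [hJ true h]; simp [macroSol, h]
    · rw [hnJ true h]; simp only [if_true, macroSol, h, if_neg, hf]
      simp [macroSol, h, hf]

lemma mmOmega_null : mmOmega n m Intervention.null = Intervention.null := by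
  refine Intervention.ext' ?_ ?_
  · ext b; simp [mmOmega, Intervention.null]
  · funext b; cases b <;> simp [mmOmega, Intervention.null]

lemma mmOmega_doW (hn : 1 ≤ n) (w : Fin n → ℝ) :
    mmOmega n m (doW m w) = doWhat (1 / (n : ℝ) * ∑ j, w j) := by
  have hne : (∃ j : Fin n, Sum.inl (β := Fin m) j ∈ (doW m w).J) :=
    ⟨⟨0, hn⟩, Set.mem_range_self _⟩
  have hnr : ¬ (∃ j : Fin m, Sum.inr (α := Fin n) j ∈ (doW m w).J) := by
    rintro ⟨j, t, ht⟩; exact Sum.inl_ne_inr ht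
  refine Intervention.ext' ?_ ?_
  · ext b; cases b <;> simp [mmOmega, doWhat, hne, hnr]
  · funext b; cases b <;> simp [mmOmega, doWhat, doW, hne, hnr]
    exact fun h => (h.false ⟨0, hn⟩).elim

lemma mmOmega_doZ (hm : 1 ≤ m) (z : Fin m → ℝ) :
    mmOmega n m (doZ n z) = doZhat (1 / (m : ℝ) * ∑ j, z j) := by
  have hne : (∃ j : Fin m, Sum.inr (α := Fin n) j ∈ (doZ n z).J) :=
    ⟨⟨0, hm⟩, Set.mem_range_self _⟩
  have hnr : ¬ (∃ j : Fin n, Sum.inl (β := Fin m) j ∈ (doZ n z).J) := by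
    rintro ⟨j, t, ht⟩; exact Sum.inr_ne_inl ht
  refine Intervention.ext' ?_ ?_
  · ext b; cases b <;> simp [mmOmega, doZhat, hne, hnr]
  · funext b; cases b <;> simp [mmOmega, doZhat, doZ, hne, hnr]
    exact fun h => (h.false ⟨0, hm⟩).elim

lemma mmOmega_doWZ (hn : 1 ≤ n) (hm : 1 ≤ m) (w : Fin n → ℝ) (z : Fin m → ℝ) :
    mmOmega n m (doWZ w z) = doWZhat (1 / (n : ℝ) * ∑ j, w j) (1 / (m : ℝ) * ∑ j, z j) := by
  have hne : (∃ j : Fin n, Sum.inl (β := Fin m) j ∈ (doWZ w z).J) :=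
    ⟨⟨0, hn⟩, Set.mem_univ _⟩
  have hnr : (∃ j : Fin m, Sum.inr (α := Fin n) j ∈ (doWZ w z).J) :=
    ⟨⟨0, hm⟩, Set.mem_univ _⟩
  refine Intervention.ext' ?_ ?_
  · ext b; cases b <;> simp [mmOmega, doWZhat, hne, hnr]
  · funext b; cases b <;> simp [mmOmega, doWZhat, doWZ, hne, hnr]
    · exact fun h => (h.false ⟨0, hn⟩).elim
    · exact fun h => (h.false ⟨0, hm⟩).elim

lemma memI_cases {i : Intervention (Fin n ⊕ Fin m)}
    (hi : i ∈ ({Intervention.null} ∪ Set.range (doW m) ∪ Set.range (doZ n) ∪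
      {k | ∃ w z, k = doWZ w z} : Set (Intervention (Fin n ⊕ Fin m)))) :
    i = Intervention.null ∨ (∃ w, i = doW m w) ∨ (∃ z, i = doZ n z) ∨ ∃ w z, i = doWZ w z := by
  simp only [Set.mem_union, Set.mem_singleton_iff, Set.mem_range, Set.mem_setOf_eq] at hi
  rcases hi with ((h | ⟨w, hw⟩) | ⟨z, hz⟩) | ⟨w, z, hwz⟩
  · exact Or.inl h
  · exact Or.inr (Or.inl ⟨w, hw.symm⟩)
  · exact Or.inr (Or.inr (Or.inl ⟨z, hz.symm⟩))
  · exact Or.inr (Or.inr (Or.inr ⟨w, z, hwz⟩))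

lemma J_inl_all {i : Intervention (Fin n ⊕ Fin m)}
    (hi : i = Intervention.null ∨ (∃ w, i = doW m w) ∨ (∃ z, i = doZ n z) ∨
      ∃ w z, i = doWZ w z)
    (h : ∃ k : Fin n, Sum.inl k ∈ i.J) (l : Fin n) : Sum.inl (β := Fin m) l ∈ i.J := by
  rcases hi with rfl | ⟨w, rfl⟩ | ⟨z, rfl⟩ | ⟨w, z, rfl⟩
  · simpa [Intervention.null] using h
  · exact Set.mem_range_self _
  · obtain ⟨k, t, ht⟩ := h; exact (Sum.inr_ne_inl ht).elim
  · exact Set.mem_univ _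

lemma J_inr_all {i : Intervention (Fin n ⊕ Fin m)}
    (hi : i = Intervention.null ∨ (∃ w, i = doW m w) ∨ (∃ z, i = doZ n z) ∨
      ∃ w z, i = doWZ w z)
    (h : ∃ k : Fin m, Sum.inr k ∈ i.J) (l : Fin m) : Sum.inr (α := Fin n) l ∈ i.J := by
  rcases hi with rfl | ⟨w, rfl⟩ | ⟨z, rfl⟩ | ⟨w, z, rfl⟩
  · simpa [Intervention.null] using h
  · obtain ⟨k, t, ht⟩ := h; exact (Sum.inl_ne_inr ht).elim
  · exact Set.mem_range_self _
  · exact Set.mem_univ _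

lemma sum_matrix_apply (A : Matrix (Fin m) (Fin n) ℝ) (a : ℝ) (hA : ∀ j, ∑ i, A i j = a)
    (x : Fin n → ℝ) : ∑ k, ∑ j, A k j * x j = a * ∑ j, x j := by
  rw [Finset.sum_comm, Finset.mul_sum]
  refine Finset.sum_congr rfl fun j _ => ?_
  rw [← Finset.sum_mul, hA]
/-- **Theorem 6 (micro- to macro-level by averaging).** Let `M_X` be the linear micro-level
SEM with variables `W : Fin n → ℝ`, `Z : Fin m → ℝ`, structural equations `Wᵢ = Eᵢ` and
`Zᵢ = ∑ⱼ Aᵢⱼ Wⱼ + Fᵢ`, exogenous law `P`, and interventions `∅`, `do(W = w)`, `do(Z = z)`,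
`do(W = w, Z = z)`. Assume every column of `A` sums to `a`. Then the macro-level SEM `M_Y`
over the two averaged variables `Ŵ` (= `false`) and `Ẑ` (= `true`), with structural
equations `Ŵ = Ê`, `Ẑ = (n·a/m)·Ŵ + F̂`, exogenous law the pushforward of `P` under
averaging, and the four corresponding macro interventions, is an exact `τ`-transformation
of `M_X` via `mmOmega`, where `τ(w, z) = ((1/n) ∑ᵢ wᵢ, (1/m) ∑ⱼ zⱼ)`. -/
theorem micro_to_macro (hn : 1 ≤ n) (hm : 1 ≤ m)
    (A : Matrix (Fin m) (Fin n) ℝ) (a : ℝ) (hA : ∀ j, ∑ i, A i j = a)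
    (P : Measure ((Fin n ⊕ Fin m) → ℝ)) (hP : IsProbabilityMeasure P)
    (MX : SEM (Fin n ⊕ Fin m) (Fin n ⊕ Fin m))
    (hfW : ∀ i v e, MX.f (Sum.inl i) v e = e (Sum.inl i))
    (hfZ : ∀ i v e, MX.f (Sum.inr i) v e = (∑ j, A i j * v (Sum.inl j)) + e (Sum.inr i))
    (hIX : MX.I = {Intervention.null} ∪ Set.range (doW m) ∪ Set.range (doZ n) ∪
      {k | ∃ w z, k = doWZ w z})
    (hPX : MX.P = P) :
    ∃ MY : SEM Bool Bool,
      (∀ (y : Bool → ℝ) (e : Bool → ℝ), MY.f false y e = e false) ∧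
      (∀ (y : Bool → ℝ) (e : Bool → ℝ),
        MY.f true y e = ((n : ℝ) * a / (m : ℝ)) * y false + e true) ∧
      MY.P = P.map (fun ef b =>
        if b then (1 / (m : ℝ)) * ∑ i, ef (Sum.inr i)
        else (1 / (n : ℝ)) * ∑ i, ef (Sum.inl i)) ∧
      MY.I = {Intervention.null} ∪ Set.range doWhat ∪ Set.range doZhat ∪
        {k | ∃ w0 z0, k = doWZhat w0 z0} ∧
      MX.ExactVia MY
        (fun v b =>
          if b then (1 / (m : ℝ)) * ∑ i, v (Sum.inr i)
          else (1 / (n : ℝ)) * ∑ i, v (Sum.inl i))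
        (mmOmega n m) := by
  classical
  haveI := hP
  have hn0 : (n : ℝ) ≠ 0 := Nat.cast_ne_zero.mpr (by omega)
  have hm0 : (m : ℝ) ≠ 0 := Nat.cast_ne_zero.mpr (by omega)
  set c : ℝ := (n : ℝ) * a / (m : ℝ) with hc
  refine ⟨{ f := fun b y e' => if b then c * y false + e' true else e' false
            I := {Intervention.null} ∪ Set.range doWhat ∪ Set.range doZhat ∪
              {k | ∃ w0 z0, k = doWZhat w0 z0}
            null_mem := Or.inl (Or.inl (Or.inl rfl))
            P := P.map (avgMap n m)
            prob := Measure.isProbabilityMeasure_map avgMap_measurable.aemeasurable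
            sol := macroSol c
            sol_measurable := fun k _ => macroSol_measurable c k
            sol_solves := fun k _ => Filter.Eventually.of_forall fun e => macroSol_solves c k e
            sol_unique := fun k _ => Filter.Eventually.of_forall fun e v h1 h2 =>
              macroSol_unique c k e v h1 h2 },
    fun y e' => by simp, fun y e' => by simp, rfl, rfl, ?_, ?_, ?_, ?_⟩
  -- (1) ω maps MX.I into MY.I
  · intro i hi
    rcases memI_cases (hIX ▸ hi) with rfl | ⟨w, rfl⟩ | ⟨z, rfl⟩ | ⟨w, z, rfl⟩
    · rw [mmOmega_null]; exact Or.inl (Or.inl (Or.inl rfl))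
    · rw [mmOmega_doW hn]; exact Or.inl (Or.inl (Or.inr (Set.mem_range_self _)))
    · rw [mmOmega_doZ hm]; exact Or.inl (Or.inr (Set.mem_range_self _))
    · rw [mmOmega_doWZ hn hm]; exact Or.inr ⟨_, _, rfl⟩
  -- (2) surjectivity
  · intro j hj
    have havgc : ∀ (N : ℕ), (N : ℝ) ≠ 0 → ∀ r : ℝ, 1 / (N : ℝ) * ∑ _j : Fin N, r = r := by
      intro N hN r
      rw [Finset.sum_const, Finset.card_univ, Fintype.card_fin, nsmul_eq_mul]
      field_simp
    simp only [Set.mem_union, Set.mem_singleton_iff, Set.mem_range, Set.mem_setOf_eq] at hj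
    rcases hj with ((rfl | ⟨w0, rfl⟩) | ⟨z0, rfl⟩) | ⟨w0, z0, rfl⟩
    · exact ⟨Intervention.null, MX.null_mem, mmOmega_null⟩
    · refine ⟨doW m (fun _ => w0), ?_, ?_⟩
      · rw [hIX]; exact Or.inl (Or.inl (Or.inr (Set.mem_range_self _)))
      · rw [mmOmega_doW hn, havgc n hn0]
    · refine ⟨doZ n (fun _ => z0), ?_, ?_⟩
      · rw [hIX]; exact Or.inl (Or.inr (Set.mem_range_self _))
      · rw [mmOmega_doZ hm, havgc m hm0]
    · refine ⟨doWZ (fun _ => w0) (fun _ => z0), ?_, ?_⟩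
      · rw [hIX]; exact Or.inr ⟨_, _, rfl⟩
      · rw [mmOmega_doWZ hn hm, havgc n hn0, havgc m hm0]
  -- (3) order-preserving
  · intro i hi j hj hij
    have hiC := memI_cases (hIX ▸ hi)
    constructor
    · intro b hb
      simp only [mmOmega, Set.mem_setOf_eq] at hb ⊢
      rcases hb with ⟨hbf, k, hk⟩ | ⟨hbt, k, hk⟩
      · exact Or.inl ⟨hbf, k, hij.1 hk⟩
      · exact Or.inr ⟨hbt, k, hij.1 hk⟩
    · intro b hb
      simp only [mmOmega, Set.mem_setOf_eq] at hb
      rcases hb with ⟨rfl, k, hk⟩ | ⟨rfl, k, hk⟩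
      · have h1 : ∃ t : Fin n, Sum.inl t ∈ i.J := ⟨k, hk⟩
        have h2 : ∃ t : Fin n, Sum.inl t ∈ j.J := ⟨k, hij.1 hk⟩
        simp only [mmOmega, Bool.false_eq_true, if_false, if_pos h1, if_pos h2]
        congr 1
        exact Finset.sum_congr rfl fun t _ => hij.2 _ (J_inl_all hiC h1 t)
      · have h1 : ∃ t : Fin m, Sum.inr t ∈ i.J := ⟨k, hk⟩
        have h2 : ∃ t : Fin m, Sum.inr t ∈ j.J := ⟨k, hij.1 hk⟩
        simp only [mmOmega, if_true, if_pos h1, if_pos h2]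
        congr 1
        exact Finset.sum_congr rfl fun t _ => hij.2 _ (J_inr_all hiC h1 t)
  -- (4) distributions
  · intro i hi
    have hiC := memI_cases (hIX ▸ hi)
    have hmeasi := MX.sol_measurable i hi
    have hsolve := MX.sol_solves i hi
    rw [hPX] at hsolve
    show (MX.dist i).map (avgMap n m) = _
    simp only [SEM.dist, hPX]
    rw [Measure.map_map avgMap_measurable hmeasi,
      Measure.map_map (macroSol_measurable c _) avgMap_measurable]
    refine Measure.map_congr ?_
    rcases hiC with rfl | ⟨w, rfl⟩ | ⟨z, rfl⟩ | ⟨w, z, rfl⟩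
    · rw [mmOmega_null]
      filter_upwards [hsolve] with e he
      have hw : ∀ k, MX.sol Intervention.null e (Sum.inl k) = e (Sum.inl k) := fun k =>
        (he.2 _ (Set.notMem_empty _)).trans (hfW _ _ _)
      have hz : ∀ k, MX.sol Intervention.null e (Sum.inr k)
          = ∑ j, A k j * e (Sum.inl j) + e (Sum.inr k) := fun k => by
        rw [he.2 _ (Set.notMem_empty _), hfZ]; simp only [hw]
      have hJ : Intervention.null.J = (∅ : Set Bool) := rfl
      show avgMap n m (MX.sol Intervention.null e) = macroSol c Intervention.null (avgMap n m e)
      funext b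
      cases b
      · simp [avgMap, macroSol, hJ, hw]
      · simp only [avgMap, macroSol, hJ, hz, Set.mem_empty_iff_false, if_false, if_true,
          Bool.false_eq_true, eq_self_iff_true]
        rw [Finset.sum_add_distrib, sum_matrix_apply A a hA, hc]
        field_simp
    · rw [mmOmega_doW hn]
      filter_upwards [hsolve] with e he
      have hw : ∀ k, MX.sol (doW m w) e (Sum.inl k) = w k := fun k =>
        he.1 _ (Set.mem_range_self _)
      have hz : ∀ k, MX.sol (doW m w) e (Sum.inr k)
          = ∑ j, A k j * w j + e (Sum.inr k) := fun k => by
        rw [he.2 _ (by rintro ⟨t, ht⟩; exact Sum.inl_ne_inr ht), hfZ]; simp only [hw]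
      show avgMap n m (MX.sol (doW m w) e)
          = macroSol c (doWhat (1 / (n : ℝ) * ∑ j, w j)) (avgMap n m e)
      funext b
      cases b
      · simp [avgMap, macroSol, doWhat, hw]
      · simp only [avgMap, macroSol, doWhat, hz, if_true, Set.mem_singleton_iff,
          Bool.true_eq_false, if_false, if_neg, Bool.false_eq_true]
        rw [Finset.sum_add_distrib, sum_matrix_apply A a hA, hc]
        field_simp
    · rw [mmOmega_doZ hm]
      filter_upwards [hsolve] with e he
      have hw : ∀ k, MX.sol (doZ n z) e (Sum.inl k) = e (Sum.inl k) := fun k =>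
        (he.2 _ (by rintro ⟨t, ht⟩; exact Sum.inr_ne_inl ht)).trans (hfW _ _ _)
      have hz : ∀ k, MX.sol (doZ n z) e (Sum.inr k) = z k := fun k =>
        he.1 _ (Set.mem_range_self _)
      show avgMap n m (MX.sol (doZ n z) e)
          = macroSol c (doZhat (1 / (m : ℝ) * ∑ j, z j)) (avgMap n m e)
      funext b
      cases b
      · simp [avgMap, macroSol, doZhat, hw]
      · simp [avgMap, macroSol, doZhat, hz]
    · rw [mmOmega_doWZ hn hm]
      filter_upwards [hsolve] with e he
      have hw : ∀ k, MX.sol (doWZ w z) e (Sum.inl k) = w k := fun k =>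
        he.1 _ (Set.mem_univ _)
      have hz : ∀ k, MX.sol (doWZ w z) e (Sum.inr k) = z k := fun k =>
        he.1 _ (Set.mem_univ _)
      show avgMap n m (MX.sol (doWZ w z) e)
          = macroSol c (doWZhat (1 / (n : ℝ) * ∑ j, w j) (1 / (m : ℝ) * ∑ j, z j))
            (avgMap n m e)
      funext b
      cases b
      · simp [avgMap, macroSol, doWZhat, hw]
      · simp [avgMap, macroSol, doWZhat, hz]

end MicroMacro
end

section
/- Equilibrium characterisation (part of Theorem 7). Let A be an n × n real matrix with v ↦ A v a contraction on Euclidean ℝ^n with constant c < 1, let J ⊆ {1,…,n}, x* : {1,…,n} → ℝ, and e ∈ ℝ^n. Define f : ℝ^n → ℝ^n by f(v)_j = x*_j for j ∈ J and f(v)_k = (A v)_k + e_k for k ∉ J. Then there exists a unique y ∈ ℝ^n satisfying the intervened cyclic structural equations y_j = x*_j for all j ∈ J and y_k = ( (∑_{l ≠ k} A_{kl} y_l) + e_k ) / (1 − A_{kk}) for all k ∉ J, and this y equals the limit lim_{t → ∞} f^[t](x₀) of the dynamics started at any x₀ ∈ ℝ^n (equivalently, y is the unique fixed point of f). -/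
open Classical Filter

/-- Clamp the coordinates in `J` to the values `xstar`, leaving the others untouched. -/
noncomputable def clampMap {n : ℕ} (J : Set (Fin n)) (xstar : Fin n → ℝ)
    (w : EuclideanSpace ℝ (Fin n)) : EuclideanSpace ℝ (Fin n) :=
  WithLp.toLp 2 (fun j => if j ∈ J then xstar j else w j)

/-- The linear map `v ↦ A v` regarded as a map of Euclidean space. -/
def matVecE {n : ℕ} (A : Matrix (Fin n) (Fin n) ℝ)
    (v : EuclideanSpace ℝ (Fin n)) : EuclideanSpace ℝ (Fin n) :=
  WithLp.toLp 2 (A.mulVec v)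

/-- The intervened linear dynamics `f(v)ⱼ = x*ⱼ` for `j ∈ J` and
`f(v)ₖ = (A v)ₖ + eₖ` for `k ∉ J`. -/
noncomputable def dynMap {n : ℕ} (A : Matrix (Fin n) (Fin n) ℝ) (e : Fin n → ℝ)
    (J : Set (Fin n)) (xstar : Fin n → ℝ)
    (v : EuclideanSpace ℝ (Fin n)) : EuclideanSpace ℝ (Fin n) :=
  clampMap J xstar (WithLp.toLp 2 (fun k => matVecE A v k + e k))

/-- **Equilibrium characterisation (part of Theorem 7).** Suppose `v ↦ A v` is a
contraction on Euclidean `ℝⁿ` with constant `c < 1`, and let `f` be the intervened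
dynamics `f(v)ⱼ = x*ⱼ` for `j ∈ J`, `f(v)ₖ = (A v)ₖ + eₖ` for `k ∉ J`. Then there is a
unique `y ∈ ℝⁿ` satisfying the intervened cyclic structural equations
`yⱼ = x*ⱼ` (`j ∈ J`) and `yₖ = ((∑_{l ≠ k} A_{kl} y_l) + eₖ) / (1 - Aₖₖ)` (`k ∉ J`), and
this `y` is the fixed point of `f` and the limit of the iterates `f^[t](x₀)` from any
initial point `x₀`. -/
theorem equilibrium_characterisation {n : ℕ} (A : Matrix (Fin n) (Fin n) ℝ)
    (c : ℝ) (hc : c < 1)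
    (hA : ∀ v w : EuclideanSpace ℝ (Fin n), ‖matVecE A v - matVecE A w‖ ≤ c * ‖v - w‖)
    (J : Set (Fin n)) (xstar : Fin n → ℝ) (e : Fin n → ℝ) :
    ∃ y : EuclideanSpace ℝ (Fin n),
      ((∀ j ∈ J, y j = xstar j) ∧
        (∀ k ∉ J, y k =
          ((∑ l ∈ Finset.univ.filter (fun l => l ≠ k), A k l * y l) + e k) / (1 - A k k))) ∧
      (∀ y' : EuclideanSpace ℝ (Fin n),
        ((∀ j ∈ J, y' j = xstar j) ∧
          (∀ k ∉ J, y' k =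
            ((∑ l ∈ Finset.univ.filter (fun l => l ≠ k), A k l * y' l) + e k) / (1 - A k k)))
        → y' = y) ∧
      dynMap A e J xstar y = y ∧
      ∀ x₀ : EuclideanSpace ℝ (Fin n),
        Tendsto (fun t => (dynMap A e J xstar)^[t] x₀) atTop (nhds y) := by
  classical
  set f := dynMap A e J xstar with hf
  -- coordinate bound
  have hcoord : ∀ (x : EuclideanSpace ℝ (Fin n)) (k : Fin n), |x k| ≤ ‖x‖ := by
    intro x k
    rw [EuclideanSpace.norm_eq]
    have h1 : |x k| = Real.sqrt (‖x k‖ ^ 2) := by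
      rw [Real.sqrt_sq_eq_abs]; simp [abs_abs]
    rw [h1]
    apply Real.sqrt_le_sqrt
    exact Finset.single_le_sum (fun i _ => sq_nonneg ‖x i‖) (Finset.mem_univ k)
  -- diagonal bound
  have hdiag : ∀ k : Fin n, |A k k| ≤ c := by
    intro k
    have h := hA (EuclideanSpace.single k 1) 0
    have h0 : matVecE A 0 = 0 := by
      simp [matVecE]
    rw [h0, sub_zero, sub_zero, EuclideanSpace.norm_single] at h
    simp only [norm_one, mul_one] at h
    have hk : (matVecE A (EuclideanSpace.single k 1)) k = A k k := by
      simp [matVecE, Matrix.mulVec, dotProduct, EuclideanSpace.single_apply,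
        mul_ite, Finset.sum_ite_eq']
    calc |A k k| = |(matVecE A (EuclideanSpace.single k 1)) k| := by rw [hk]
      _ ≤ ‖matVecE A (EuclideanSpace.single k 1)‖ := hcoord _ k
      _ ≤ c := h
  have hAkk : ∀ k : Fin n, A k k ≠ 1 := by
    intro k hk
    have := hdiag k
    rw [hk] at this
    simp at this
    linarith
  -- dynMap is a contraction
  set K : NNReal := ⟨max c 0, le_max_right _ _⟩ with hK
  have hK1 : K < 1 := by
    rw [← NNReal.coe_lt_coe]
    exact max_lt hc one_pos
  have hlip : LipschitzWith K f := by
    apply LipschitzWith.of_dist_le_mul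
    intro v w
    rw [dist_eq_norm, dist_eq_norm]
    have key : ‖f v - f w‖ ≤ ‖matVecE A v - matVecE A w‖ := by
      rw [EuclideanSpace.norm_eq, EuclideanSpace.norm_eq]
      apply Real.sqrt_le_sqrt
      apply Finset.sum_le_sum
      intro i _
      by_cases hi : i ∈ J
      · have : (f v - f w) i = 0 := by
          simp [hf, dynMap, clampMap, hi, PiLp.sub_apply]
        rw [this]
        simp [sq_nonneg]
      · have : (f v - f w) i = (matVecE A v - matVecE A w) i := by
          simp [hf, dynMap, clampMap, hi, PiLp.sub_apply]
        rw [this]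
    calc ‖f v - f w‖ ≤ ‖matVecE A v - matVecE A w‖ := key
      _ ≤ c * ‖v - w‖ := hA v w
      _ ≤ K * ‖v - w‖ := by
        apply mul_le_mul_of_nonneg_right _ (norm_nonneg _)
        exact le_max_left _ _
  have hcontr : ContractingWith K f := ⟨hK1, hlip⟩
  -- the fixed point
  let y := ContractingWith.fixedPoint f hcontr
  have hyfix : Function.IsFixedPt f y := hcontr.fixedPoint_isFixedPt
  -- equivalence of structural equations with fixed point
  have heqn : ∀ z : EuclideanSpace ℝ (Fin n),
      ((∀ j ∈ J, z j = xstar j) ∧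
        (∀ k ∉ J, z k =
          ((∑ l ∈ Finset.univ.filter (fun l => l ≠ k), A k l * z l) + e k) / (1 - A k k)))
      ↔ Function.IsFixedPt f z := by
    intro z
    have hsplit : ∀ k : Fin n, (matVecE A z) k =
        A k k * z k + ∑ l ∈ Finset.univ.filter (fun l => l ≠ k), A k l * z l := by
      intro k
      have : (matVecE A z) k = ∑ l, A k l * z l := by
        simp [matVecE, Matrix.mulVec, dotProduct]
      rw [this, Finset.filter_ne', ← Finset.sum_erase_add _ _ (Finset.mem_univ k)]
      ring
    constructor
    · rintro ⟨h1, h2⟩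
      apply PiLp.ext; intro i
      by_cases hi : i ∈ J
      · simp [hf, dynMap, clampMap, hi, h1 i hi]
      · have hne : 1 - A i i ≠ 0 := sub_ne_zero.mpr (Ne.symm (hAkk i))
        have hz := h2 i hi
        have hgoal : (matVecE A z) i + e i = z i := by
          rw [hsplit i]
          field_simp at hz
          linarith
        simpa [hf, dynMap, clampMap, hi] using hgoal
    · intro hfix
      have hfix' : ∀ i, f z i = z i := fun i => congrArg (fun x : EuclideanSpace ℝ (Fin n) => x i) hfix
      constructor
      · intro j hj
        have := hfix' j
        simpa [hf, dynMap, clampMap, hj] using this.symm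
      · intro k hk
        have := hfix' k
        simp only [hf, dynMap, clampMap, hk, if_neg, if_false] at this
        rw [hsplit k] at this
        have hne : 1 - A k k ≠ 0 := sub_ne_zero.mpr (Ne.symm (hAkk k))
        field_simp
        linarith
  refine ⟨y, (heqn y).mpr hyfix, ?_, hyfix, fun x₀ => hcontr.tendsto_iterate_fixedPoint x₀⟩
  intro y' hy'
  exact hcontr.fixedPoint_unique ((heqn y').mp hy')
end

section
/- Theorem 7, distributional form (stationary behaviour of a discrete-time linear dynamical process). Let A be an n × n real matrix with v ↦ A v a contraction on Euclidean ℝ^n with constant c < 1, let J ⊆ {1,…,n} and x* : {1,…,n} → ℝ. For e ∈ ℝ^n let f_e : ℝ^n → ℝ^n be defined by f_e(v)_j = x*_j for j ∈ J and f_e(v)_k = (A v)_k + e_k for k ∉ J, and let L(e) ∈ ℝ^n denote the unique fixed point of f_e, so that L(e) = lim_{t → ∞} f_e^[t](x₀) for every x₀. Then L : ℝ^n → ℝ^n is measurable, and for every probability measure P on ℝ^n the pushforward of P under L (the law of the equilibrium state of the intervened dynamics X_{t+1} = A X_t + E with X_t^j clamped to x*_j for j ∈ J, where E ∼ P is held fixed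 in time) equals the pushforward of P under the map sending e to the unique solution y of the intervened cyclic structural equations y_j = x*_j (j ∈ J) and y_k = ( (∑_{l ≠ k} A_{kl} y_l) + e_k ) / (1 − A_{kk}) (k ∉ J). In other words, the cyclic SEM with structural equations Y^k = (∑_{l ≠ k} A_{kl} Y^l)/(1 − A_{kk}) + F^k/(1 − A_{kk}), F ∼ P, under the intervention do(Y^j = x*_j for j ∈ J), implies exactly the distribution of the equilibrium of the intervened linear dynamical process with identical noise. -/
open Classical Filter MeasureTheory

/-- **Theorem 7, distributional form (stationary behaviour of a discrete-time linear
dynamical process).** Suppose `v ↦ A v` is a contraction on Euclidean `ℝⁿ` with constant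
`c < 1`, fix an intervention clamping the `J`-coordinates to `x*`, and for each noise
value `e` let `L e` be the unique fixed point of the intervened dynamics `f_e`
(equivalently, the limit of `f_e^[t](x₀)` from any `x₀`). Let `S e` be the unique solution
of the intervened cyclic structural equations `yⱼ = x*ⱼ` (`j ∈ J`),
`yₖ = ((∑_{l ≠ k} A_{kl} y_l) + eₖ) / (1 - Aₖₖ)` (`k ∉ J`). Then `L` is measurable and,
for every probability measure `P` on `ℝⁿ`, the pushforward of `P` under `L` — the law of
the equilibrium state of the intervened dynamics `X_{t+1} = A X_t + E` with `E ∼ P` held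
fixed in time — equals the pushforward of `P` under `S`, the distribution implied by the
intervened cyclic SEM. -/
theorem stationary_distribution_of_dynamics {n : ℕ} (A : Matrix (Fin n) (Fin n) ℝ)
    (c : ℝ) (hc : c < 1)
    (hA : ∀ v w : EuclideanSpace ℝ (Fin n), ‖matVecE A v - matVecE A w‖ ≤ c * ‖v - w‖)
    (J : Set (Fin n)) (xstar : Fin n → ℝ)
    (L : (Fin n → ℝ) → EuclideanSpace ℝ (Fin n))
    (hL : ∀ e : Fin n → ℝ,
      dynMap A e J xstar (L e) = L e ∧
      ∀ x₀ : EuclideanSpace ℝ (Fin n),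
        Tendsto (fun t => (dynMap A e J xstar)^[t] x₀) atTop (nhds (L e)))
    (S : (Fin n → ℝ) → EuclideanSpace ℝ (Fin n))
    (hS : ∀ e : Fin n → ℝ,
      (∀ j ∈ J, S e j = xstar j) ∧
      (∀ k ∉ J, S e k =
        ((∑ l ∈ Finset.univ.filter (fun l => l ≠ k), A k l * S e l) + e k) / (1 - A k k))) :
    Measurable L ∧
    ∀ P : Measure (Fin n → ℝ), IsProbabilityMeasure P → P.map L = P.map S := by
  -- diagonal entries have absolute value < 1
  have hdiag : ∀ k : Fin n, |A k k| < 1 := by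
    intro k
    have h := hA (EuclideanSpace.single k (1 : ℝ)) 0
    have h0 : matVecE A 0 = 0 := by
      ext i
      simp [matVecE, Matrix.mulVec, dotProduct]
    rw [h0, sub_zero, sub_zero, EuclideanSpace.norm_single] at h
    have habs : |A k k| ≤ ‖matVecE A (EuclideanSpace.single k (1 : ℝ))‖ := by
      have := EuclideanSpace.norm_eq (matVecE A (EuclideanSpace.single k (1 : ℝ)))
      have hcoord : matVecE A (EuclideanSpace.single k (1 : ℝ)) k = A k k := by
        simp [matVecE, Matrix.mulVec, dotProduct, EuclideanSpace.single_apply]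
      calc |A k k| = Real.sqrt (|A k k| ^ 2) := by
            rw [Real.sqrt_sq (abs_nonneg _)]
        _ ≤ ‖matVecE A (EuclideanSpace.single k (1 : ℝ))‖ := by
            rw [this]
            apply Real.sqrt_le_sqrt
            rw [← hcoord]
            have : |matVecE A (EuclideanSpace.single k (1:ℝ)) k| ^ 2
                = ‖matVecE A (EuclideanSpace.single k (1:ℝ)) k‖ ^ 2 := by
              simp [Real.norm_eq_abs]
            rw [this]
            exact Finset.single_le_sum (f := fun i => ‖matVecE A (EuclideanSpace.single k (1:ℝ)) i‖ ^ 2)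
              (fun i _ => by positivity) (Finset.mem_univ k)
    simp at h
    calc |A k k| ≤ c := le_trans habs h
      _ < 1 := hc
  -- dynMap is Lipschitz with constant c
  have hlip : ∀ (e : Fin n → ℝ) (v w : EuclideanSpace ℝ (Fin n)),
      ‖dynMap A e J xstar v - dynMap A e J xstar w‖ ≤ c * ‖v - w‖ := by
    intro e v w
    refine le_trans ?_ (hA v w)
    rw [EuclideanSpace.norm_eq, EuclideanSpace.norm_eq]
    apply Real.sqrt_le_sqrt
    apply Finset.sum_le_sum
    intro i _
    by_cases hi : i ∈ J
    · have : (dynMap A e J xstar v - dynMap A e J xstar w) i = 0 := by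
        simp [dynMap, clampMap, hi]
      rw [this]
      simp
      positivity
    · have : (dynMap A e J xstar v - dynMap A e J xstar w) i
          = (matVecE A v - matVecE A w) i := by
        simp [dynMap, clampMap, hi]
      rw [this]
  -- S e is a fixed point of the dynamics
  have hfix : ∀ e : Fin n → ℝ, dynMap A e J xstar (S e) = S e := by
    intro e
    ext k
    by_cases hk : k ∈ J
    · simp [dynMap, clampMap, hk, (hS e).1 k hk]
    · have hne : (1 : ℝ) - A k k ≠ 0 := by
        have := hdiag k
        rw [abs_lt] at this
        intro h
        have : A k k = 1 := by linarith
        linarith [this ▸ (hdiag k)]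
      have hSk := (hS e).2 k hk
      have hmul : (1 - A k k) * S e k
          = (∑ l ∈ Finset.univ.filter (fun l => l ≠ k), A k l * S e l) + e k := by
        rw [hSk]; field_simp
      have hsplit : ∑ l, A k l * S e l
          = A k k * S e k + ∑ l ∈ Finset.univ.filter (fun l => l ≠ k), A k l * S e l := by
        rw [Finset.filter_ne']
        rw [← Finset.add_sum_erase Finset.univ (fun l => A k l * S e l) (Finset.mem_univ k)]
      show clampMap J xstar (WithLp.toLp 2 (fun i => matVecE A (S e) i + e i)) k = S e k
      simp only [clampMap, if_neg hk, matVecE, Matrix.mulVec, dotProduct]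
      rw [hsplit]
      linarith [hmul]
  -- L = S
  have hLS : L = S := by
    funext e
    have h1 := (hL e).1
    have h2 := hfix e
    have h3 : ‖L e - S e‖ ≤ c * ‖L e - S e‖ := by
      calc ‖L e - S e‖ = ‖dynMap A e J xstar (L e) - dynMap A e J xstar (S e)‖ := by
            rw [h1, h2]
        _ ≤ c * ‖L e - S e‖ := hlip e _ _
    have h4 : ‖L e - S e‖ = 0 := by
      nlinarith [norm_nonneg (L e - S e)]
    exact sub_eq_zero.mp (norm_eq_zero.mp h4)
  -- measurability of the iterates
  have hiter : ∀ t : ℕ,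
      Measurable (fun e : Fin n → ℝ => (dynMap A e J xstar)^[t] (0 : EuclideanSpace ℝ (Fin n))) := by
    intro t
    induction t with
    | zero => simp
    | succ t ih =>
      have heq : (fun e : Fin n → ℝ => (dynMap A e J xstar)^[t+1] (0 : EuclideanSpace ℝ (Fin n)))
          = fun e => dynMap A e J xstar ((dynMap A e J xstar)^[t] 0) := by
        funext e; rw [Function.iterate_succ_apply']
      rw [heq]
      apply (WithLp.measurable_toLp 2 _).comp
      apply measurable_pi_lambda
      intro k
      by_cases hk : k ∈ J
      · simp only [dynMap, clampMap, if_pos hk]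
        exact measurable_const
      · simp only [dynMap, clampMap, if_neg hk, matVecE, Matrix.mulVec, dotProduct]
        apply Measurable.add
        · apply Finset.measurable_sum
          intro l _
          exact (measurable_pi_apply l).comp ((WithLp.measurable_ofLp 2 _).comp ih) |>.const_mul (A k l)
        · exact measurable_pi_apply k
  constructor
  · exact measurable_of_tendsto_metrizable hiter
      (tendsto_pi_nhds.2 fun e => (hL e).2 0)
  · intro P hP
    rw [hLS]
end
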